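/- Let Ω ⊆ ℝ² be open, let f : Ω → ℝ be positive and continuously differentiable, and let w = u + jv be a continuously differentiable 𝔻-valued function on Ω satisfying the Vekua equation w_z̄ = −(f_z/f)·w̄ on Ω (equivalently, u_x − v_t = −(f_x/f)u + (f_t/f)v and v_x − u_t = (f_t/f)u − (f_x/f)v). Then the function Φ = w/f, with components Φ₁ = u/f and Φ₂ = v/f, satisfies the compatibility condition ∂_t Φ₁ − ∂_x Φ₂ = 0 on Ω. -/

import Mathlib

noncomputable section

open Filter Topology MeasureTheory

/-- Hyperbolic (duplex) numbers 𝔻, modeled as pairs `(Re z, Im z)` with `j ^ 2 = 1`. -/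
abbrev Hyp : Type := ℝ × ℝ

/-- Real part of a hyperbolic number. -/
def hre (a : Hyp) : ℝ := a.1

/-- Imaginary part of a hyperbolic number. -/
def him (a : Hyp) : ℝ := a.2

/-- The hyperbolic imaginary unit `j`. -/
def hj : Hyp := (0, 1)

/-- Hyperbolic multiplication: `(x+tj)(x'+t'j) = (xx'+tt') + (xt'+tx')j`. -/
def hmul (a b : Hyp) : Hyp := (a.1 * b.1 + a.2 * b.2, a.1 * b.2 + a.2 * b.1)

/-- Hyperbolic conjugation: `conj (x+tj) = x - tj`. -/
def hconj (a : Hyp) : Hyp := (a.1, -a.2)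

/-- Invertibility of a hyperbolic number: `x² ≠ t²`. -/
def IsInv (a : Hyp) : Prop := a.1 ^ 2 ≠ a.2 ^ 2

/-- Hyperbolic inverse `z⁻¹ = z̄ / |z|²` with `|z|² = x² - t²`. -/
def hinv (a : Hyp) : Hyp := (a.1 / (a.1 ^ 2 - a.2 ^ 2), -a.2 / (a.1 ^ 2 - a.2 ^ 2))

/-- Hyperbolic division. -/
def hdiv (a b : Hyp) : Hyp := hmul a (hinv b)

/-- Partial derivative in the first (`x`) variable. -/
def pdx (g : Hyp → ℝ) (p : Hyp) : ℝ := deriv (fun s => g (s, p.2)) p.1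

/-- Partial derivative in the second (`t`) variable. -/
def pdt (g : Hyp → ℝ) (p : Hyp) : ℝ := deriv (fun s => g (p.1, s)) p.2

/-- The wave operator `□g = g_xx - g_tt`. -/
def waveOp (g : Hyp → ℝ) (p : Hyp) : ℝ := pdx (pdx g) p - pdt (pdt g) p

/-- `w_z = ½(∂_x + j ∂_t) w = ½((u_x+v_t) + (v_x+u_t)j)` for a 𝔻-valued `w = u + jv`. -/
def dz (w : Hyp → Hyp) (p : Hyp) : Hyp :=
  ((pdx (fun q => (w q).1) p + pdt (fun q => (w q).2) p) / 2,
   (pdx (fun q => (w q).2) p + pdt (fun q => (w q).1) p) / 2)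

/-- `w_z̄ = ½(∂_x - j ∂_t) w = ½((u_x-v_t) + (v_x-u_t)j)` for a 𝔻-valued `w = u + jv`. -/
def dzbar (w : Hyp → Hyp) (p : Hyp) : Hyp :=
  ((pdx (fun q => (w q).1) p - pdt (fun q => (w q).2) p) / 2,
   (pdx (fun q => (w q).2) p - pdt (fun q => (w q).1) p) / 2)

/-- `f_z = ½(f_x + j f_t)` for a real-valued `f`. -/
def rz (f : Hyp → ℝ) (p : Hyp) : Hyp := (pdx f p / 2, pdt f p / 2)

/-- `f_z̄ = ½(f_x - j f_t)` for a real-valued `f`. -/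
def rzbar (f : Hyp → ℝ) (p : Hyp) : Hyp := (pdx f p / 2, -(pdt f p) / 2)

/-- 𝔻-differentiability at `z₀`: the difference quotient `(f z - f z₀)·(z - z₀)⁻¹`
tends to `d` as `z → z₀` through points with `z - z₀` invertible. -/
def HasHDerivAt (f : Hyp → Hyp) (d : Hyp) (z₀ : Hyp) : Prop :=
  Filter.Tendsto (fun z => hmul (f z - f z₀) (hinv (z - z₀)))
    (nhdsWithin z₀ {z | IsInv (z - z₀)}) (nhds d)

/-- `F Ḡ - F̄ G`. -/
def pairDenom (F G : Hyp → Hyp) (z : Hyp) : Hyp :=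
  hmul (F z) (hconj (G z)) - hmul (hconj (F z)) (G z)

/-- Characteristic coefficient `a_(F,G) = -(F̄ G_z̄ - F_z̄ Ḡ)/(F Ḡ - F̄ G)`. -/
def aFG (F G : Hyp → Hyp) (z : Hyp) : Hyp :=
  - hdiv (hmul (hconj (F z)) (dzbar G z) - hmul (dzbar F z) (hconj (G z))) (pairDenom F G z)

/-- Characteristic coefficient `b_(F,G) = (F G_z̄ - F_z̄ G)/(F Ḡ - F̄ G)`. -/
def bFG (F G : Hyp → Hyp) (z : Hyp) : Hyp :=
  hdiv (hmul (F z) (dzbar G z) - hmul (dzbar F z) (G z)) (pairDenom F G z)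

/-- Characteristic coefficient `A_(F,G) = -(F̄ G_z - F_z Ḡ)/(F Ḡ - F̄ G)`. -/
def AFG (F G : Hyp → Hyp) (z : Hyp) : Hyp :=
  - hdiv (hmul (hconj (F z)) (dz G z) - hmul (dz F z) (hconj (G z))) (pairDenom F G z)

/-- Characteristic coefficient `B_(F,G) = (F G_z - F_z G)/(F Ḡ - F̄ G)`. -/
def BFG (F G : Hyp → Hyp) (z : Hyp) : Hyp :=
  hdiv (hmul (F z) (dz G z) - hmul (dz F z) (G z)) (pairDenom F G z)

/-- A generating pair on `Ω`: twice continuously differentiable `F, G` with `Im(F̄G) ≠ 0`. -/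
def IsGenPair (F G : Hyp → Hyp) (Ω : Set Hyp) : Prop :=
  ContDiffOn ℝ 2 F Ω ∧ ContDiffOn ℝ 2 G Ω ∧ ∀ z ∈ Ω, him (hmul (hconj (F z)) (G z)) ≠ 0

/-- The idempotent `e₁ = (1+j)/2`. -/
def e1 : Hyp := (1/2, 1/2)

/-- The idempotent `e₂ = (1-j)/2`. -/
def e2 : Hyp := (1/2, -1/2)

/-- Contour integral `∮_{∂R} h dz` over the counterclockwise boundary of the rectangle
`[x₁,x₂] × [t₁,t₂]`, with hyperbolic multiplication (`dz = dx` on horizontal sides,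
`dz = j dt` on vertical sides). -/
def rectContourInt (h : Hyp → Hyp) (x₁ x₂ t₁ t₂ : ℝ) : Hyp :=
  ((∫ x in x₁..x₂, h (x, t₁)) - ∫ x in x₁..x₂, h (x, t₂)) +
    hmul hj ((∫ t in t₁..t₂, h (x₂, t)) - ∫ t in t₁..t₂, h (x₁, t))

/-- Integral `∫_{[z₀,z]} h dζ` along the straight segment from `z₀` to `z`,
with hyperbolic multiplication. -/
def segInt (h : Hyp → Hyp) (z₀ z : Hyp) : Hyp :=
  ∫ s in (0:ℝ)..1, hmul (h (z₀ + s • (z - z₀))) (z - z₀)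

/-- Natural powers in 𝔻. -/
def hpow (a : Hyp) : ℕ → Hyp
  | 0 => (1, 0)
  | n + 1 => hmul a (hpow a n)

/-- Integer powers in 𝔻 (for invertible base). -/
def hzpow (a : Hyp) : ℤ → Hyp
  | Int.ofNat n => hpow a n
  | Int.negSucc n => hinv (hpow a (n + 1))

section PartialDerivatives

variable {g h : Hyp → ℝ} {p : Hyp}

theorem hasDerivAt_pdx (hg : DifferentiableAt ℝ g p) :
    HasDerivAt (fun s => g (s, p.2)) (pdx g p) p.1 :=
  (hg.comp (f := fun s : ℝ => ((s, p.2) : Hyp)) p.1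
    (differentiableAt_id.prodMk (differentiableAt_const _))).hasDerivAt

theorem hasDerivAt_pdt (hg : DifferentiableAt ℝ g p) :
    HasDerivAt (fun s => g (p.1, s)) (pdt g p) p.2 :=
  (hg.comp (f := fun s : ℝ => ((p.1, s) : Hyp)) p.2
    ((differentiableAt_const _).prodMk differentiableAt_id)).hasDerivAt

theorem pdx_div (hg : DifferentiableAt ℝ g p) (hh : DifferentiableAt ℝ h p) (h0 : h p ≠ 0) :
    pdx (fun q => g q / h q) p = (pdx g p * h p - g p * pdx h p) / h p ^ 2 :=
  ((hasDerivAt_pdx hg).div (hasDerivAt_pdx hh) h0).deriv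

theorem pdt_div (hg : DifferentiableAt ℝ g p) (hh : DifferentiableAt ℝ h p) (h0 : h p ≠ 0) :
    pdt (fun q => g q / h q) p = (pdt g p * h p - g p * pdt h p) / h p ^ 2 :=
  ((hasDerivAt_pdt hg).div (hasDerivAt_pdt hh) h0).deriv

end PartialDerivatives

/-- The `j`-component of the Vekua equation `w_z̄ = −(f_z/f) w̄`, cleared of denominators. -/
theorem vekua_snd {f : Hyp → ℝ} {w : Hyp → Hyp} {p : Hyp} (hfp : f p ≠ 0)
    (hVekua : dzbar w p = - hmul (hdiv (rz f p) (f p, 0)) (hconj (w p))) :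
    f p * (pdx (fun q => (w q).2) p - pdt (fun q => (w q).1) p)
      = pdx f p * (w p).2 - pdt f p * (w p).1 := by
  have hsnd := congrArg Prod.snd hVekua
  simp only [dzbar, hmul, hdiv, hinv, rz, hconj, Prod.snd_neg] at hsnd
  field_simp at hsnd
  apply mul_left_cancel₀ hfp
  linear_combination hsnd

/-- if `f > 0` is C¹ and `w = u + jv ∈ C¹(Ω)` solves `w_z̄ = −(f_z/f)w̄`,
then `Φ = w/f` with components `Φ₁ = u/f`, `Φ₂ = v/f` satisfies `∂_tΦ₁ − ∂_xΦ₂ = 0` on `Ω`. -/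
theorem vekua_compatibility_condition (Ω : Set Hyp) (hΩ : IsOpen Ω)
    (f : Hyp → ℝ) (hf : ContDiffOn ℝ 1 f Ω) (hfpos : ∀ p ∈ Ω, 0 < f p)
    (w : Hyp → Hyp) (hw : ContDiffOn ℝ 1 w Ω)
    (hVekua : ∀ p ∈ Ω, dzbar w p = - hmul (hdiv (rz f p) (f p, 0)) (hconj (w p))) :
    ∀ p ∈ Ω,
      pdt (fun q => (w q).1 / f q) p - pdx (fun q => (w q).2 / f q) p = 0 := by
  intro p hp
  have hfp : DifferentiableAt ℝ f p :=
    (hf.differentiableOn one_ne_zero).differentiableAt (hΩ.mem_nhds hp)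
  have hwp : DifferentiableAt ℝ w p :=
    (hw.differentiableOn one_ne_zero).differentiableAt (hΩ.mem_nhds hp)
  have hf0 : f p ≠ 0 := (hfpos p hp).ne'
  rw [pdt_div hwp.fst hfp hf0, pdx_div hwp.snd hfp hf0, div_sub_div_same, div_eq_zero_iff]
  left
  linear_combination -vekua_snd hf0 (hVekua p hp)
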